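/- arXiv:quant-ph/0302115 — 3 statements merged into one kernel-verified Lean document; each statement's English description precedes it below -/
import Mathlib

section
/- Let (Ω, Σ, μ) be a probability space and A, B ∈ Σ with μ(A ∩ B) > μ(A)μ(B). Suppose C ∈ Σ satisfies C ⊆ A ∩ B and μ(C) = (μ(A ∩ B) − μ(A)μ(B))/(1 − μ(A ∪ B)), where μ(A ∪ B) < 1. Then C satisfies all four Reichenbach common-cause conditions: μ(A ∩ B | C) = μ(A|C)μ(B|C), μ(A ∩ B | Cᶜ) = μ(A|Cᶜ)μ(B|Cᶜ), μ(A|C) > μ(A|Cᶜ), and μ(B|C) > μ(B|Cᶜ). -/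
open MeasureTheory

/-- Conditional probability `μ(X|Y) = μ(X ∩ Y)/μ(Y)` as a real number. -/
noncomputable def condProb {Ω : Type*} [MeasurableSpace Ω] (μ : Measure Ω) (X Y : Set Ω) : ℝ :=
  (μ (X ∩ Y)).toReal / (μ Y).toReal

/-- A subevent of `A ∩ B` with the right probability is a Reichenbachian common cause. -/
theorem stmt_1 {Ω : Type*} [MeasurableSpace Ω] (μ : Measure Ω) [IsProbabilityMeasure μ]
    (A B C : Set Ω) (hA : MeasurableSet A) (hB : MeasurableSet B) (hC : MeasurableSet C)
    (hcorr : (μ (A ∩ B)).toReal > (μ A).toReal * (μ B).toReal)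
    (hCsub : C ⊆ A ∩ B)
    (hAB1 : (μ (A ∪ B)).toReal < 1)
    (hCval : (μ C).toReal =
      ((μ (A ∩ B)).toReal - (μ A).toReal * (μ B).toReal) / (1 - (μ (A ∪ B)).toReal)) :
    condProb μ (A ∩ B) C = condProb μ A C * condProb μ B C ∧
    condProb μ (A ∩ B) Cᶜ = condProb μ A Cᶜ * condProb μ B Cᶜ ∧
    condProb μ A C > condProb μ A Cᶜ ∧
    condProb μ B C > condProb μ B Cᶜ := by
  have hCA : C ⊆ A := fun x hx => (hCsub hx).1
  have hCB : C ⊆ B := fun x hx => (hCsub hx).2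
  set a := (μ A).toReal with ha
  set b := (μ B).toReal with hb
  set p := (μ (A ∩ B)).toReal with hp
  set c := (μ C).toReal with hc
  set u := (μ (A ∪ B)).toReal with hu
  have hfin : ∀ S : Set Ω, μ S ≠ ⊤ := fun S => measure_ne_top μ S
  have hsum : u + p = a + b := by
    rw [hu, hp, ha, hb, ← ENNReal.toReal_add (hfin _) (hfin _),
      measure_union_add_inter A hB, ENNReal.toReal_add (hfin _) (hfin _)]
  have hdiff : ∀ X : Set Ω, C ⊆ X → (μ (X ∩ Cᶜ)).toReal = (μ X).toReal - c := by
    intro X hsub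
    rw [← Set.diff_eq, measure_diff hsub hC.nullMeasurableSet (hfin C), hc,
      ENNReal.toReal_sub_of_le (measure_mono hsub) (hfin X)]
  have hcompl : (μ Cᶜ).toReal = 1 - c := by
    rw [prob_compl_eq_one_sub hC, hc,
      ENNReal.toReal_sub_of_le prob_le_one ENNReal.one_ne_top, ENNReal.toReal_one]
  have hau : a ≤ u := ENNReal.toReal_mono (hfin _) (measure_mono Set.subset_union_left)
  have hbu : b ≤ u := ENNReal.toReal_mono (hfin _) (measure_mono Set.subset_union_right)
  have ha1 : a < 1 := lt_of_le_of_lt hau hAB1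
  have hb1 : b < 1 := lt_of_le_of_lt hbu hAB1
  have hca : c ≤ a := ENNReal.toReal_mono (hfin _) (measure_mono hCA)
  have hcb : c ≤ b := ENNReal.toReal_mono (hfin _) (measure_mono hCB)
  have hc1 : c < 1 := lt_of_le_of_lt hca ha1
  have hcpos : 0 < c := by
    rw [hCval]; exact div_pos (by linarith) (by linarith)
  have key : c * (1 - u) = p - a * b := by
    rw [hCval, div_mul_cancel₀ _ (by linarith : (1:ℝ) - u ≠ 0)]
  have hAC : A ∩ C = C := Set.inter_eq_right.mpr hCA
  have hBC : B ∩ C = C := Set.inter_eq_right.mpr hCB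
  have hABC : (A ∩ B) ∩ C = C := Set.inter_eq_right.mpr hCsub
  refine ⟨?_, ?_, ?_, ?_⟩
  · simp only [condProb, hAC, hBC, hABC, ← hc, div_self hcpos.ne']
    ring
  · simp only [condProb, hdiff _ hCsub, hdiff _ hCA, hdiff _ hCB, hcompl, ← ha, ← hb, ← hp]
    rw [div_mul_div_comm, div_eq_div_iff (by linarith) (by nlinarith)]
    nlinarith [key, hsum]
  · simp only [condProb, hAC, hdiff _ hCA, hcompl, ← ha, ← hc, div_self hcpos.ne']
    rw [gt_iff_lt, div_lt_one (by linarith)]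
    linarith
  · simp only [condProb, hBC, hdiff _ hCB, hcompl, ← hb, ← hc, div_self hcpos.ne']
    rw [gt_iff_lt, div_lt_one (by linarith)]
    linarith
end

section
/- Let H be a complex Hilbert space, let X₁, X₂, Y₁, Y₂ be self-adjoint contractions on H such that each Xᵢ commutes with each Yⱼ. Then the operator norm of (1/2)(X₁(Y₁ + Y₂) + X₂(Y₁ − Y₂)) is at most √2. -/
/-- Cirel'son's bound for the Bell operator. -/
theorem stmt_4 {H : Type*} [NormedAddCommGroup H] [InnerProductSpace ℂ H] [CompleteSpace H]
    (X₁ X₂ Y₁ Y₂ : H →L[ℂ] H)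
    (hX₁ : IsSelfAdjoint X₁) (hX₂ : IsSelfAdjoint X₂)
    (hY₁ : IsSelfAdjoint Y₁) (hY₂ : IsSelfAdjoint Y₂)
    (hX₁n : ‖X₁‖ ≤ 1) (hX₂n : ‖X₂‖ ≤ 1) (hY₁n : ‖Y₁‖ ≤ 1) (hY₂n : ‖Y₂‖ ≤ 1)
    (hc₁₁ : Commute X₁ Y₁) (hc₁₂ : Commute X₁ Y₂)
    (hc₂₁ : Commute X₂ Y₁) (hc₂₂ : Commute X₂ Y₂) :
    ‖(1/2 : ℂ) • (X₁ * (Y₁ + Y₂) + X₂ * (Y₁ - Y₂))‖ ≤ Real.sqrt 2 := by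
  have hC : ‖X₁ * (Y₁ + Y₂) + X₂ * (Y₁ - Y₂)‖ ≤ 2 * Real.sqrt 2 := by
    apply ContinuousLinearMap.opNorm_le_bound _ (by positivity)
    intro v
    have ha : ‖X₁ ((Y₁ + Y₂) v)‖ ≤ ‖(Y₁ + Y₂) v‖ := by
      calc ‖X₁ ((Y₁ + Y₂) v)‖ ≤ ‖X₁‖ * ‖(Y₁ + Y₂) v‖ := X₁.le_opNorm _
        _ ≤ 1 * ‖(Y₁ + Y₂) v‖ := by gcongr
        _ = _ := one_mul _
    have hb : ‖X₂ ((Y₁ - Y₂) v)‖ ≤ ‖(Y₁ - Y₂) v‖ := by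
      calc ‖X₂ ((Y₁ - Y₂) v)‖ ≤ ‖X₂‖ * ‖(Y₁ - Y₂) v‖ := X₂.le_opNorm _
        _ ≤ 1 * ‖(Y₁ - Y₂) v‖ := by gcongr
        _ = _ := one_mul _
    have hpar := parallelogram_law_with_norm ℂ (Y₁ v) (Y₂ v)
    have hstep : ‖(X₁ * (Y₁ + Y₂) + X₂ * (Y₁ - Y₂)) v‖
        ≤ ‖(Y₁ + Y₂) v‖ + ‖(Y₁ - Y₂) v‖ := by
      calc ‖(X₁ * (Y₁ + Y₂) + X₂ * (Y₁ - Y₂)) v‖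
          = ‖X₁ ((Y₁ + Y₂) v) + X₂ ((Y₁ - Y₂) v)‖ := rfl
        _ ≤ ‖X₁ ((Y₁ + Y₂) v)‖ + ‖X₂ ((Y₁ - Y₂) v)‖ := norm_add_le _ _
        _ ≤ _ := add_le_add ha hb
    have h1 : ‖Y₁ v‖ ≤ ‖v‖ := by
      calc ‖Y₁ v‖ ≤ ‖Y₁‖ * ‖v‖ := Y₁.le_opNorm _
        _ ≤ 1 * ‖v‖ := by gcongr
        _ = _ := one_mul _
    have h2 : ‖Y₂ v‖ ≤ ‖v‖ := by
      calc ‖Y₂ v‖ ≤ ‖Y₂‖ * ‖v‖ := Y₂.le_opNorm _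
        _ ≤ 1 * ‖v‖ := by gcongr
        _ = _ := one_mul _
    have hav : (Y₁ + Y₂) v = Y₁ v + Y₂ v := rfl
    have hbv : (Y₁ - Y₂) v = Y₁ v - Y₂ v := rfl
    rw [hav, hbv] at hstep
    have hsq : Real.sqrt 2 * Real.sqrt 2 = 2 := Real.mul_self_sqrt (by norm_num)
    have hs0 : (0:ℝ) ≤ Real.sqrt 2 := Real.sqrt_nonneg 2
    have hv0 : (0:ℝ) ≤ ‖v‖ := norm_nonneg v
    have hA : (0:ℝ) ≤ ‖Y₁ v + Y₂ v‖ := norm_nonneg _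
    have hB : (0:ℝ) ≤ ‖Y₁ v - Y₂ v‖ := norm_nonneg _
    have hsum2 : (‖Y₁ v + Y₂ v‖ + ‖Y₁ v - Y₂ v‖)^2 ≤ (2 * Real.sqrt 2 * ‖v‖)^2 := by
      nlinarith [sq_nonneg (‖Y₁ v + Y₂ v‖ - ‖Y₁ v - Y₂ v‖),
        mul_le_mul h1 h1 (norm_nonneg _) hv0, mul_le_mul h2 h2 (norm_nonneg _) hv0]
    have hle := Real.sqrt_le_sqrt hsum2
    rw [Real.sqrt_sq (by positivity), Real.sqrt_sq (by positivity)] at hle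
    linarith
  rw [norm_smul]
  have : ‖(1/2 : ℂ)‖ = 1/2 := by norm_num
  rw [this]
  nlinarith [Real.sqrt_nonneg 2]
end

section
/- Let (Ω, Σ, μ) be a probability space and let A₁, A₂, B₁, B₂ : Ω → [−1, 1] be measurable functions. Then |∫ A₁(B₁ + B₂) dμ + ∫ A₂(B₁ − B₂) dμ| ≤ 2. -/
open MeasureTheory

lemma chsh_pointwise (a₁ a₂ b₁ b₂ : ℝ) (ha₁ : |a₁| ≤ 1) (ha₂ : |a₂| ≤ 1)
    (hb₁ : |b₁| ≤ 1) (hb₂ : |b₂| ≤ 1) :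
    |a₁ * (b₁ + b₂) + a₂ * (b₁ - b₂)| ≤ 2 := by
  have key : |b₁ + b₂| + |b₁ - b₂| ≤ 2 := by
    rcases abs_cases (b₁ + b₂) with ⟨h1,_⟩|⟨h1,_⟩ <;>
      rcases abs_cases (b₁ - b₂) with ⟨h2,_⟩|⟨h2,_⟩ <;>
      rcases abs_le.mp hb₁ with ⟨_,_⟩ <;> rcases abs_le.mp hb₂ with ⟨_,_⟩ <;> linarith
  calc |a₁ * (b₁ + b₂) + a₂ * (b₁ - b₂)|
      ≤ |a₁ * (b₁ + b₂)| + |a₂ * (b₁ - b₂)| := abs_add_le _ _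
    _ = |a₁| * |b₁ + b₂| + |a₂| * |b₁ - b₂| := by rw [abs_mul, abs_mul]
    _ ≤ 1 * |b₁ + b₂| + 1 * |b₁ - b₂| := by
        gcongr <;> first | exact ha₁ | exact ha₂ | positivity
    _ ≤ 2 := by simpa using key

/-- The integrated CHSH–Bell inequality for classical random variables. -/
theorem stmt_8 {Ω : Type*} [MeasurableSpace Ω] (μ : Measure Ω) [IsProbabilityMeasure μ]
    (A₁ A₂ B₁ B₂ : Ω → ℝ)
    (hA₁ : Measurable A₁) (hA₂ : Measurable A₂) (hB₁ : Measurable B₁) (hB₂ : Measurable B₂)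
    (hA₁b : ∀ ω, A₁ ω ∈ Set.Icc (-1 : ℝ) 1) (hA₂b : ∀ ω, A₂ ω ∈ Set.Icc (-1 : ℝ) 1)
    (hB₁b : ∀ ω, B₁ ω ∈ Set.Icc (-1 : ℝ) 1) (hB₂b : ∀ ω, B₂ ω ∈ Set.Icc (-1 : ℝ) 1) :
    |(∫ ω, A₁ ω * (B₁ ω + B₂ ω) ∂μ) + ∫ ω, A₂ ω * (B₁ ω - B₂ ω) ∂μ| ≤ 2 := by
  have habs : ∀ (f : Ω → ℝ), (∀ ω, f ω ∈ Set.Icc (-1 : ℝ) 1) → ∀ ω, |f ω| ≤ 1 := by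
    intro f hf ω; exact abs_le.mpr ⟨(hf ω).1, (hf ω).2⟩
  have hi1 : Integrable (fun ω => A₁ ω * (B₁ ω + B₂ ω)) μ := by
    refine ⟨(hA₁.mul (hB₁.add hB₂)).aestronglyMeasurable,
      HasFiniteIntegral.of_bounded (C := 2) (Filter.Eventually.of_forall fun ω => ?_)⟩
    calc ‖A₁ ω * (B₁ ω + B₂ ω)‖ = |A₁ ω| * |B₁ ω + B₂ ω| := abs_mul _ _
      _ ≤ 1 * 2 := by
          apply mul_le_mul (habs _ hA₁b ω) _ (abs_nonneg _) zero_le_one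
          calc |B₁ ω + B₂ ω| ≤ |B₁ ω| + |B₂ ω| := abs_add_le _ _
            _ ≤ 1 + 1 := add_le_add (habs _ hB₁b ω) (habs _ hB₂b ω)
            _ = 2 := by norm_num
      _ = 2 := by norm_num
  have hi2 : Integrable (fun ω => A₂ ω * (B₁ ω - B₂ ω)) μ := by
    refine ⟨(hA₂.mul (hB₁.sub hB₂)).aestronglyMeasurable,
      HasFiniteIntegral.of_bounded (C := 2) (Filter.Eventually.of_forall fun ω => ?_)⟩
    calc ‖A₂ ω * (B₁ ω - B₂ ω)‖ = |A₂ ω| * |B₁ ω - B₂ ω| := abs_mul _ _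
      _ ≤ 1 * 2 := by
          apply mul_le_mul (habs _ hA₂b ω) _ (abs_nonneg _) zero_le_one
          calc |B₁ ω - B₂ ω| ≤ |B₁ ω| + |B₂ ω| := abs_sub _ _
            _ ≤ 1 + 1 := add_le_add (habs _ hB₁b ω) (habs _ hB₂b ω)
            _ = 2 := by norm_num
      _ = 2 := by norm_num
  rw [← integral_add hi1 hi2]
  have := norm_integral_le_of_norm_le_const (μ := μ)
    (f := fun ω => A₁ ω * (B₁ ω + B₂ ω) + A₂ ω * (B₁ ω - B₂ ω)) (C := 2)
    (Filter.Eventually.of_forall fun ω =>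
      chsh_pointwise _ _ _ _ (habs _ hA₁b ω) (habs _ hA₂b ω) (habs _ hB₁b ω) (habs _ hB₂b ω))
  simpa [measure_univ] using this
end
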